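/- Let Γ be the Heisenberg group on A × ℤ with nondegenerate integral symplectic form, endowed with a word metric d_S for a finite generating set S. For any nontrivial (noncentral) conjugacy class 𝔎 in Γ, the counting function N_𝔎(n) = Card(𝔎 ∩ B_{d_S}(e,n)) grows quadratically: there exists c ∈ ℕ∖{0} such that n²/c ≤ N_𝔎(c·n) and N_𝔎(n) ≤ c·(c·n)² for all large n (i.e. N_𝔎(n) ≍ n²). -/

import Mathlib

/-!
Conjugating `γ = (a, z)` by `(b, 0)` gives `(a, z + 2 ω b a)`, so the conjugacy class of a
noncentral `γ` lies in the fibre over `a` and contains the arithmetic progression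
`(a, z + 2 j ω b a)`, `j ∈ ℕ`, for any `b` with `ω b a ≠ 0`. The centre is quadratically
distorted: `⁅(b, 0) ^ q, (a, 0) ^ n⁆ = (0, 2 q n ω b a)` has word length `O(n)`, so writing
`j = q n + r` puts the first `n²` terms of the progression in a ball of radius `O(n)`.
Conversely a product of `n` generators has central coordinate `O(n²)`, so a ball of radius
`n` meets the fibre over `a` in `O(n²)` points.
-/

/-- The Heisenberg group associated to an integral symplectic form `ω` on a free abelian
group `A`: the underlying set is `A × ℤ`, with group law
`(a,z)(a',z') = (a+a', z+z'+ω a a')`. (For an alternating form `ω`, the inverse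
`(-a, -z + ω a a)` is just `(-a, -z)`.) -/
structure Heis {A : Type*} [AddCommGroup A] (ω : A →ₗ[ℤ] A →ₗ[ℤ] ℤ) where
  fst : A
  snd : ℤ

namespace Heis

variable {A : Type*} [AddCommGroup A] {ω : A →ₗ[ℤ] A →ₗ[ℤ] ℤ}

def mul' (g h : Heis ω) : Heis ω := ⟨g.fst + h.fst, g.snd + h.snd + ω g.fst h.fst⟩

def inv' (g : Heis ω) : Heis ω := ⟨-g.fst, -g.snd + ω g.fst g.fst⟩

theorem mul'_assoc (g h k : Heis ω) : mul' (mul' g h) k = mul' g (mul' h k) := by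
  obtain ⟨a, z⟩ := g; obtain ⟨b, w⟩ := h; obtain ⟨c, u⟩ := k
  refine congrArg₂ Heis.mk ?_ ?_ <;>
    simp [mul', map_add, LinearMap.add_apply] <;> first | abel | ring | (ring_nf <;> abel)

theorem one_mul' (g : Heis ω) : mul' ⟨0, 0⟩ g = g := by
  obtain ⟨a, z⟩ := g
  refine congrArg₂ Heis.mk ?_ ?_ <;> simp [mul']

theorem mul_one' (g : Heis ω) : mul' g ⟨0, 0⟩ = g := by
  obtain ⟨a, z⟩ := g
  refine congrArg₂ Heis.mk ?_ ?_ <;> simp [mul']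

theorem inv_mul_cancel' (g : Heis ω) : mul' (inv' g) g = ⟨0, 0⟩ := by
  obtain ⟨a, z⟩ := g
  refine congrArg₂ Heis.mk ?_ ?_ <;>
    simp [mul', inv', map_neg, LinearMap.neg_apply] <;> ring

instance : Group (Heis ω) where
  mul := mul'
  one := ⟨0, 0⟩
  inv := inv'
  mul_assoc := mul'_assoc
  one_mul := one_mul'
  mul_one := mul_one'
  inv_mul_cancel := inv_mul_cancel'

theorem mul_def (g h : Heis ω) :
    g * h = ⟨g.fst + h.fst, g.snd + h.snd + ω g.fst h.fst⟩ := rfl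

theorem inv_def (g : Heis ω) : g⁻¹ = ⟨-g.fst, -g.snd + ω g.fst g.fst⟩ := rfl

end Heis

open scoped commutatorElement

section WordBall

variable {G : Type*} [Group G] (S : Set G)

def wordBall (n : ℕ) : Set G :=
  {g | ∃ l : List G, l.length ≤ n ∧ (∀ x ∈ l, x ∈ S ∨ x⁻¹ ∈ S) ∧ l.prod = g}

variable {S}

theorem wordBall_zero : wordBall S 0 = {1} := by
  ext g
  simp [wordBall, eq_comm]

theorem wordBall_mono : Monotone (wordBall S) := by
  rintro m n hmn g ⟨l, hl, hS, rfl⟩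
  exact ⟨l, hl.trans hmn, hS, rfl⟩

theorem mul_mem_wordBall {g h : G} {m n : ℕ} (hg : g ∈ wordBall S m) (hh : h ∈ wordBall S n) :
    g * h ∈ wordBall S (m + n) := by
  obtain ⟨l, hl, hlS, rfl⟩ := hg
  obtain ⟨l', hl', hl'S, rfl⟩ := hh
  refine ⟨l ++ l', by simp; omega, ?_, List.prod_append⟩
  simp only [List.mem_append]
  rintro x (hx | hx)
  exacts [hlS x hx, hl'S x hx]

theorem inv_mem_wordBall {g : G} {n : ℕ} (hg : g ∈ wordBall S n) : g⁻¹ ∈ wordBall S n := by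
  obtain ⟨l, hl, hlS, rfl⟩ := hg
  refine ⟨(l.map (·⁻¹)).reverse, by simpa using hl, ?_, List.prod_inv_reverse l |>.symm⟩
  simp only [List.mem_reverse, List.mem_map]
  rintro _ ⟨x, hx, rfl⟩
  simpa [or_comm] using hlS x hx

theorem pow_mem_wordBall {g : G} {n : ℕ} (hg : g ∈ wordBall S n) (k : ℕ) :
    g ^ k ∈ wordBall S (k * n) := by
  induction k with
  | zero => simp [wordBall_zero]
  | succ k ih => simpa [pow_succ, add_mul] using mul_mem_wordBall ih hg

theorem commutatorElement_mem_wordBall {g h : G} {m n : ℕ} (hg : g ∈ wordBall S m)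
    (hh : h ∈ wordBall S n) : ⁅g, h⁆ ∈ wordBall S (2 * m + 2 * n) := by
  have := mul_mem_wordBall (mul_mem_wordBall (mul_mem_wordBall hg hh) (inv_mem_wordBall hg))
    (inv_mem_wordBall hh)
  rw [commutatorElement_def]
  convert this using 2
  ring

theorem exists_mem_wordBall (hS : Subgroup.closure S = ⊤) (g : G) :
    ∃ n, g ∈ wordBall S n := by
  have hg : g ∈ (Subgroup.closure S).toSubmonoid := by rw [hS]; trivial
  rw [Subgroup.closure_toSubmonoid] at hg
  obtain ⟨l, hl, rfl⟩ := Submonoid.exists_list_of_mem_closure hg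
  exact ⟨l.length, l, le_rfl, fun x hx => (hl x hx).imp id Set.mem_inv.mp, rfl⟩

end WordBall

attribute [ext] Heis

namespace Heis

variable {A : Type*} [AddCommGroup A] {ω : A →ₗ[ℤ] A →ₗ[ℤ] ℤ}

@[simp] theorem fst_mul (g h : Heis ω) : (g * h).fst = g.fst + h.fst := rfl

@[simp] theorem snd_mul (g h : Heis ω) : (g * h).snd = g.snd + h.snd + ω g.fst h.fst := rfl

@[simp] theorem fst_inv (g : Heis ω) : g⁻¹.fst = -g.fst := rfl

@[simp] theorem snd_inv (g : Heis ω) : g⁻¹.snd = -g.snd + ω g.fst g.fst := rfl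

@[simp] theorem fst_one : (1 : Heis ω).fst = 0 := rfl

@[simp] theorem snd_one : (1 : Heis ω).snd = 0 := rfl

theorem mul_mk_zero (g : Heis ω) (z : ℤ) : g * ⟨0, z⟩ = ⟨g.fst, g.snd + z⟩ := by
  ext <;> simp

theorem mul_mul_inv (hω : ω.IsAlt) (g h : Heis ω) :
    g * h * g⁻¹ = ⟨h.fst, h.snd + 2 * ω g.fst h.fst⟩ := by
  have := hω.neg h.fst g.fst
  ext
  · simp
  · simp [hω.self_eq_zero]; linarith

theorem commutatorElement_mk_zero (hω : ω.IsAlt) (x y : A) :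
    ⁅(⟨x, 0⟩ : Heis ω), (⟨y, 0⟩ : Heis ω)⁆ = ⟨0, 2 * ω x y⟩ := by
  rw [commutatorElement_def, mul_mul_inv hω]
  ext <;> simp [hω.self_eq_zero]

theorem mk_zero_pow (hω : ω.IsAlt) (x : A) (k : ℕ) :
    (⟨x, 0⟩ : Heis ω) ^ k = ⟨k • x, 0⟩ := by
  induction k with
  | zero => ext <;> simp
  | succ k ih => ext <;> simp [pow_succ, ih, add_smul, hω.self_eq_zero]

theorem fst_eq_of_isConj (hω : ω.IsAlt) {g h : Heis ω} (hgh : IsConj g h) : h.fst = g.fst := by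
  obtain ⟨c, rfl⟩ := isConj_iff.mp hgh
  rw [mul_mul_inv hω]

theorem isConj_mul_mk_zero (hω : ω.IsAlt) (g : Heis ω) (b : A) :
    IsConj g (g * ⟨0, 2 * ω b g.fst⟩) :=
  isConj_iff.mpr ⟨⟨b, 0⟩, by rw [mul_mul_inv hω, mul_mk_zero]⟩

section WordBound

variable {T : Set (Heis ω)} {M : ℤ} (hM : ∀ t ∈ T, ∀ t' ∈ T, |ω t.fst t'.fst| ≤ M)
include hM

theorem abs_apply_fst_list_prod_le {t : Heis ω} (ht : t ∈ T) :
    ∀ l : List (Heis ω), (∀ x ∈ l, x ∈ T) → |ω t.fst l.prod.fst| ≤ l.length * M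
  | [], _ => by simp
  | x :: l, hl => by
    have hx := hM t ht x (hl x List.mem_cons_self)
    have ih := abs_apply_fst_list_prod_le ht l fun y hy => hl y (List.mem_cons_of_mem x hy)
    calc |ω t.fst (x :: l).prod.fst| = |ω t.fst x.fst + ω t.fst l.prod.fst| := by simp
      _ ≤ |ω t.fst x.fst| + |ω t.fst l.prod.fst| := abs_add_le _ _
      _ ≤ (x :: l).length * M := by push_cast [List.length_cons]; linarith

theorem abs_snd_list_prod_le (hsnd : ∀ t ∈ T, |t.snd| ≤ M) :
    ∀ l : List (Heis ω), (∀ x ∈ l, x ∈ T) → |l.prod.snd| ≤ l.length ^ 2 * M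
  | [], _ => by simp
  | x :: l, hl => by
    have hxT := hl x List.mem_cons_self
    have hlT : ∀ y ∈ l, y ∈ T := fun y hy => hl y (List.mem_cons_of_mem x hy)
    have h₁ := hsnd x hxT
    have h₂ := abs_snd_list_prod_le hsnd l hlT
    have h₃ := abs_apply_fst_list_prod_le hM hxT l hlT
    have hM₀ : 0 ≤ M := (abs_nonneg _).trans h₁
    calc |(x :: l).prod.snd| = |x.snd + l.prod.snd + ω x.fst l.prod.fst| := by simp
      _ ≤ |x.snd| + |l.prod.snd| + |ω x.fst l.prod.fst| := abs_add_three _ _ _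
      _ ≤ (x :: l).length ^ 2 * M := by
        push_cast [List.length_cons]; nlinarith [Nat.cast_nonneg (α := ℤ) l.length]

end WordBound

variable {S : Set (Heis ω)}

theorem exists_abs_snd_le_of_mem_wordBall (hS : S.Finite) :
    ∃ M : ℕ, ∀ n, ∀ g ∈ wordBall S n, |g.snd| ≤ (M * n ^ 2 : ℕ) := by
  have hT : (S ∪ S⁻¹).Finite := hS.union hS.inv
  obtain ⟨M, hM⟩ := ((hT.prod hT).image
    fun p : Heis ω × Heis ω => (ω p.1.fst p.2.fst).natAbs + p.1.snd.natAbs).bddAbove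
  have hbound : ∀ t ∈ S ∪ S⁻¹, ∀ t' ∈ S ∪ S⁻¹,
      |ω t.fst t'.fst| ≤ M ∧ |t.snd| ≤ M := fun t ht t' ht' => by
    have : _ ≤ M := hM ⟨(t, t'), ⟨ht, ht'⟩, rfl⟩
    dsimp only at this
    simp only [Int.abs_eq_natAbs]
    omega
  refine ⟨M, fun n g ⟨l, hl, hlS, hg⟩ => ?_⟩
  subst hg
  calc |l.prod.snd| ≤ l.length ^ 2 * M :=
        abs_snd_list_prod_le (fun t ht t' ht' => (hbound t ht t' ht').1)
          (fun t ht => (hbound t ht t ht).2) l hlS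
    _ ≤ (M * n ^ 2 : ℕ) := by push_cast; rw [mul_comm]; gcongr

theorem exists_isConj_inter_wordBall_subset (hω : ω.IsAlt) (hS : S.Finite) (γ : Heis ω) :
    ∃ M : ℕ, ∀ n, {g | IsConj γ g} ∩ wordBall S n ⊆
      Heis.mk γ.fst '' Set.Icc (-(M * n ^ 2 : ℕ) : ℤ) (M * n ^ 2 : ℕ) := by
  obtain ⟨M, hM⟩ := exists_abs_snd_le_of_mem_wordBall hS
  refine ⟨M, fun n g ⟨hγg, hg⟩ => ⟨g.snd, abs_le.mp (hM n g hg), ?_⟩⟩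
  ext
  · exact (fst_eq_of_isConj hω hγg).symm
  · rfl

theorem finite_isConj_inter_wordBall (hω : ω.IsAlt) (hS : S.Finite) (γ : Heis ω) (n : ℕ) :
    ({g | IsConj γ g} ∩ wordBall S n).Finite := by
  obtain ⟨M, hM⟩ := exists_isConj_inter_wordBall_subset hω hS γ
  exact ((Set.finite_Icc _ _).image _).subset (hM n)

theorem exists_ncard_isConj_inter_wordBall_le (hω : ω.IsAlt) (hS : S.Finite) {γ : Heis ω}
    (hγ : γ.fst ≠ 0) :
    ∃ C : ℕ, ∀ n, ({g | IsConj γ g} ∩ wordBall S n).ncard ≤ C * n ^ 2 := by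
  obtain ⟨M, hM⟩ := exists_isConj_inter_wordBall_subset hω hS γ
  refine ⟨2 * M + 1, fun n => ?_⟩
  rcases Nat.eq_zero_or_pos n with rfl | hn
  · suffices {g | IsConj γ g} ∩ wordBall S 0 = ∅ by
      rw [this, Set.ncard_empty]; exact Nat.zero_le _
    refine Set.eq_empty_of_forall_notMem fun g ⟨hγg, hg⟩ => hγ ?_
    rw [wordBall_zero, Set.mem_singleton_iff] at hg
    simpa [hg] using (fst_eq_of_isConj hω hγg).symm
  calc ({g | IsConj γ g} ∩ wordBall S n).ncard
      ≤ (Heis.mk γ.fst '' Set.Icc (-(M * n ^ 2 : ℕ) : ℤ) (M * n ^ 2 : ℕ)).ncard :=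
        Set.ncard_le_ncard (hM n) ((Set.finite_Icc _ _).image _)
    _ ≤ (Set.Icc (-(M * n ^ 2 : ℕ) : ℤ) (M * n ^ 2 : ℕ)).ncard :=
        Set.ncard_image_le (Set.finite_Icc _ _)
    _ = 2 * (M * n ^ 2) + 1 := by
        rw [← Finset.coe_Icc, Set.ncard_coe_finset, Int.card_Icc]; omega
    _ ≤ (2 * M + 1) * n ^ 2 := by nlinarith [Nat.one_le_pow 2 n hn]

theorem mk_zero_mem_wordBall_of_lt_sq (hω : ω.IsAlt) {x y : A} {ℓ n j : ℕ}
    (hx : (⟨x, 0⟩ : Heis ω) ∈ wordBall S ℓ)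
    (hy : (⟨y, 0⟩ : Heis ω) ∈ wordBall S ℓ)
    (hj : j < n ^ 2) : (⟨0, 2 * j * ω x y⟩ : Heis ω) ∈ wordBall S (8 * ℓ * n) := by
  have hn : 0 < n := by rcases n with _ | n <;> simp_all
  obtain ⟨q, r, hq, hr, rfl⟩ : ∃ q r, q < n ∧ r < n ∧ j = q * n + r :=
    ⟨j / n, j % n, Nat.div_lt_of_lt_mul (by rwa [sq] at hj), Nat.mod_lt j hn,
      (Nat.div_add_mod' j n).symm⟩
  set u : Heis ω := ⟨x, 0⟩
  set v : Heis ω := ⟨y, 0⟩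
  have hcomm : (⟨0, 2 * (q * n + r : ℕ) * ω x y⟩ : Heis ω) =
      ⁅u ^ q, v ^ n⁆ * ⁅u ^ r, v⁆ := by
    simp only [u, v, mk_zero_pow hω, commutatorElement_mk_zero hω]
    ext <;> simp; ring
  rw [hcomm]
  refine wordBall_mono ?_ (mul_mem_wordBall
    (commutatorElement_mem_wordBall (pow_mem_wordBall hx q) (pow_mem_wordBall hy n))
    (commutatorElement_mem_wordBall (pow_mem_wordBall hx r) hy))
  nlinarith

theorem exists_sq_le_ncard_isConj_inter_wordBall (hω : ω.IsAlt) (hS : S.Finite)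
    (hSgen : Subgroup.closure S = ⊤) {γ : Heis ω} {b : A} (hb : ω γ.fst b ≠ 0) :
    ∃ C : ℕ, ∀ n, n ^ 2 ≤ ({g | IsConj γ g} ∩ wordBall S (C * n)).ncard := by
  obtain ⟨ℓγ, hγ⟩ := exists_mem_wordBall hSgen γ
  obtain ⟨ℓx, hx⟩ := exists_mem_wordBall hSgen (⟨b, 0⟩ : Heis ω)
  obtain ⟨ℓy, hy⟩ := exists_mem_wordBall hSgen (⟨γ.fst, 0⟩ : Heis ω)
  have hd : ω b γ.fst ≠ 0 := fun h => hb (hω.eq_iff.mp h)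
  set C := ℓγ + 8 * (ℓx + ℓy)
  refine ⟨C, fun n => ?_⟩
  set κ : ℕ → Heis ω := fun j => γ * ⟨0, 2 * j * ω b γ.fst⟩
  have hκ_inj : κ.Injective := fun i j hij => by
    have := congrArg Heis.snd hij
    simp only [κ, snd_mul] at this
    have : (2 * i : ℤ) = 2 * j := mul_right_cancel₀ hd (by linarith)
    omega
  have hκ_mem : ∀ j < n ^ 2, κ j ∈ {g | IsConj γ g} ∩ wordBall S (C * n) := fun j hj => by
    have hn : 1 ≤ n := by rcases n with _ | n <;> simp_all
    have hcentral := mk_zero_mem_wordBall_of_lt_sq hω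
      (wordBall_mono (Nat.le_add_right ℓx ℓy) hx)
      (wordBall_mono (Nat.le_add_left ℓy ℓx) hy) hj
    refine ⟨?_, wordBall_mono ?_ (mul_mem_wordBall hγ hcentral)⟩
    · have : κ j = γ * ⟨0, 2 * ω (j • b) γ.fst⟩ := by
        simp only [κ, map_nsmul, LinearMap.smul_apply, nsmul_eq_mul]; ring_nf
      show IsConj γ (κ j)
      rw [this]
      exact isConj_mul_mk_zero hω γ (j • b)
    · simp only [C]; nlinarith
  calc n ^ 2 = (κ '' Set.Iio (n ^ 2)).ncard := by
        rw [Set.ncard_image_of_injective _ hκ_inj, Set.ncard_Iio_nat]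
    _ ≤ ({g | IsConj γ g} ∩ wordBall S (C * n)).ncard :=
        Set.ncard_le_ncard (Set.image_subset_iff.mpr hκ_mem)
          (finite_isConj_inter_wordBall hω hS γ _)

end Heis

theorem heisenberg_conjugacy_class_quadratic_growth_general
    {A : Type*} [AddCommGroup A]
    (ω : A →ₗ[ℤ] A →ₗ[ℤ] ℤ) (hω : ∀ a : A, ω a a = 0)
    (hnd : ∀ a : A, a ≠ 0 → ∃ b : A, ω a b ≠ 0)
    (S : Set (Heis ω)) (hSfin : S.Finite) (hSgen : Subgroup.closure S = ⊤)
    (γ₀ : Heis ω) (hγ₀ : γ₀.fst ≠ 0)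
    (ball : ℕ → Set (Heis ω))
    (hball : ∀ n : ℕ, ball n = {g : Heis ω | ∃ l : List (Heis ω),
      l.length ≤ n ∧ (∀ x ∈ l, x ∈ S ∨ x⁻¹ ∈ S) ∧ l.prod = g})
    (N : ℕ → ℕ)
    (hN : ∀ n : ℕ, N n = ({γ : Heis ω | IsConj γ₀ γ} ∩ ball n).ncard) :
    ∃ c : ℕ, 0 < c ∧ ∀ n : ℕ, n ^ 2 ≤ N (c * n) ∧ N n ≤ (c * n) ^ 2 := by
  obtain rfl : ball = wordBall S := funext hball
  obtain ⟨b, hb⟩ := hnd γ₀.fst hγ₀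
  obtain ⟨C₁, hC₁⟩ := Heis.exists_sq_le_ncard_isConj_inter_wordBall hω hSfin hSgen hb
  obtain ⟨C₂, hC₂⟩ := Heis.exists_ncard_isConj_inter_wordBall_le hω hSfin hγ₀
  refine ⟨C₁ + C₂ + 1, Nat.succ_pos _, fun n => ⟨?_, ?_⟩⟩
  · rw [hN]
    refine (hC₁ n).trans (Set.ncard_le_ncard ?_
      (Heis.finite_isConj_inter_wordBall hω hSfin γ₀ _))
    exact Set.inter_subset_inter_right _ (wordBall_mono (by gcongr; omega))
  · rw [hN]
    refine (hC₂ n).trans ?_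
    rw [mul_pow]
    gcongr
    calc C₂ ≤ C₁ + C₂ + 1 := by omega
      _ ≤ (C₁ + C₂ + 1) ^ 2 := Nat.le_self_pow two_ne_zero _

/-- Proposition 2.3: in the Heisenberg group `Γ = A × ℤ` over a nondegenerate alternating
integral bilinear form on a free abelian group `A` of rank `2k`, endowed with the word metric
of a finite generating set `S`, the counting function
`N_𝔎(n) = Card (𝔎 ∩ B_{d_S}(e, n))` of any nontrivial (noncentral) conjugacy class `𝔎`
grows quadratically: `N_𝔎 ≍ n²`, i.e. there is `c ∈ ℕ ∖ {0}` with `n² ≤ N_𝔎(c n)` and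
`N_𝔎(n) ≤ (c n)²` for all `n`. -/
theorem heisenberg_conjugacy_class_quadratic_growth
    {A : Type*} [AddCommGroup A] [Module.Free ℤ A] [Module.Finite ℤ A]
    (k : ℕ) (hrank : Module.finrank ℤ A = 2 * k)
    (ω : A →ₗ[ℤ] A →ₗ[ℤ] ℤ) (hω : ∀ a : A, ω a a = 0)
    (hnd : ∀ a : A, a ≠ 0 → ∃ b : A, ω a b ≠ 0)
    (S : Set (Heis ω)) (hSfin : S.Finite) (hSgen : Subgroup.closure S = ⊤)
    (γ₀ : Heis ω) (hγ₀ : γ₀.fst ≠ 0)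
    (ball : ℕ → Set (Heis ω))
    (hball : ∀ n : ℕ, ball n = {g : Heis ω | ∃ l : List (Heis ω),
      l.length ≤ n ∧ (∀ x ∈ l, x ∈ S ∨ x⁻¹ ∈ S) ∧ l.prod = g})
    (N : ℕ → ℕ)
    (hN : ∀ n : ℕ, N n = ({γ : Heis ω | IsConj γ₀ γ} ∩ ball n).ncard) :
    ∃ c : ℕ, 0 < c ∧ ∀ n : ℕ, n ^ 2 ≤ N (c * n) ∧ N n ≤ (c * n) ^ 2 :=
  heisenberg_conjugacy_class_quadratic_growth_general ω hω hnd S hSfin hSgen γ₀ hγ₀ ball hball N hN
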